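/- Let p be an odd prime, let a, b, c be positive integers with p ∤ abc and gcd(a,b,pˢc) = 1, and let s ≥ 2 be an integer. Suppose that the diagonal ternary quadratic form ⟨a,b,pˢc⟩ = ax²+by²+pˢcz² is odd-regular and that the binary form ax²+by² is anisotropic over ℤ_p (its only zero (x,y) ∈ ℤ_p² is (0,0)). Then the diagonal ternary quadratic form ⟨a,b,p^{s−2}c⟩ = ax²+by²+p^{s−2}cz² is odd-regular. -/

import Mathlib

/-- `n` is represented by the diagonal form `a x² + b y² + c z²` over `ℤ_p`. -/
def ReprAt (p : ℕ) (hp : p.Prime) (a b c n : ℤ) : Prop :=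
  letI : Fact p.Prime := ⟨hp⟩
  ∃ x y z : ℤ_[p], (a : ℤ_[p]) * x ^ 2 + (b : ℤ_[p]) * y ^ 2 + (c : ℤ_[p]) * z ^ 2 = (n : ℤ_[p])

/-- `n` is represented by `a x² + b y² + c z²` over `ℤ`. -/
def ReprZ (a b c n : ℤ) : Prop :=
  ∃ x y z : ℤ, a * x ^ 2 + b * y ^ 2 + c * z ^ 2 = n

/-- The diagonal ternary form `⟨a,b,c⟩` is odd-regular. -/
def OddRegular (a b c : ℤ) : Prop :=
  ∀ n : ℤ, 0 < n → Odd n → (∀ (p : ℕ) (hp : p.Prime), ReprAt p hp a b c n) → ReprZ a b c n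

/-- The diagonal ternary form `⟨a,b,c⟩` is regular. -/
def Regular (a b c : ℤ) : Prop :=
  ∀ n : ℤ, 0 < n → (∀ (p : ℕ) (hp : p.Prime), ReprAt p hp a b c n) → ReprZ a b c n

/-- Value of the diagonal form on a vector. -/
def Qdiag {R : Type*} [CommRing R] (a b c : ℤ) (v : Fin 3 → R) : R :=
  (a : R) * v 0 ^ 2 + (b : R) * v 1 ^ 2 + (c : R) * v 2 ^ 2

/-- Polar bilinear form of the diagonal form. -/
def Bdiag {R : Type*} [CommRing R] (a b c : ℤ) (u v : Fin 3 → R) : R :=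
  (a : R) * u 0 * v 0 + (b : R) * u 1 * v 1 + (c : R) * u 2 * v 2

/-- The diagonal ternary form `⟨a,b,c⟩` is `p`-stable for the odd prime `p`. -/
def PStable (p : ℕ) (hp : p.Prime) (a b c : ℤ) : Prop :=
  letI : Fact p.Prime := ⟨hp⟩
  (∃ u v : Fin 3 → ℤ_[p], Qdiag a b c u = 1 ∧ Qdiag a b c v = -1 ∧ Bdiag a b c u v = 0) ∨
  (∃ Δ ε : ℤ_[p], IsUnit Δ ∧ (¬ ∃ t : ℤ_[p], t ^ 2 = Δ) ∧ IsUnit ε ∧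
    ∃ U : Matrix (Fin 3) (Fin 3) ℤ_[p], IsUnit U.det ∧
      ∀ x : Fin 3 → ℤ_[p],
        Qdiag a b c (U.mulVec x) = x 0 ^ 2 - Δ * x 1 ^ 2 + (p : ℤ_[p]) * ε * x 2 ^ 2)

/-- The diagonal ternary form `⟨a,b,c⟩` is stable. -/
def Stable (a b c : ℤ) : Prop :=
  ∀ (p : ℕ) (hp : p.Prime), p ≠ 2 → PStable p hp a b c

/-- The diagonal ternary form `⟨a,b,c⟩` is anisotropic over `ℤ_p`. -/
def AnisotropicAt (p : ℕ) (hp : p.Prime) (a b c : ℤ) : Prop :=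
  letI : Fact p.Prime := ⟨hp⟩
  ∀ v : Fin 3 → ℤ_[p], Qdiag a b c v = 0 → v = 0


open Polynomial in
lemma hensel_solve (p : ℕ) (hp : p.Prime) [Fact p.Prime] (hp2 : p ≠ 2) (a b X Y : ℤ)
    (hna : ¬ (p : ℤ) ∣ a) (hnb : ¬ (p : ℤ) ∣ b) (hX : ¬ (p : ℤ) ∣ X)
    (hd : (p : ℤ) ∣ a * X ^ 2 + b * Y ^ 2) :
    ∃ t : ℤ_[p], (b : ℤ_[p]) * t ^ 2 + (a : ℤ_[p]) = 0 := by
  have hpI : Prime (p : ℤ) := Nat.prime_iff_prime_int.mp hp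
  have hY : ¬ (p : ℤ) ∣ Y := by
    intro hY
    have h1 : (p : ℤ) ∣ a * X ^ 2 := by
      have h2 : (p : ℤ) ∣ b * Y ^ 2 := Dvd.dvd.mul_left (hY.pow two_ne_zero) b
      have h3 := dvd_sub hd h2
      simpa using h3
    rcases hpI.dvd_mul.mp h1 with h | h
    · exact hna h
    · exact hX (hpI.dvd_of_dvd_pow h)
  obtain ⟨u, v, huv⟩ := (hpI.coprime_iff_not_dvd.mpr hX)
  -- u * p + v * X = 1
  have hW : (p : ℤ) ∣ X * v - 1 := ⟨-u, by linarith⟩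
  have hvp : ¬ (p : ℤ) ∣ v := by
    intro hv
    rcases hW with ⟨m, hm⟩; rcases hv with ⟨k, hk⟩
    have : (p : ℤ) ∣ 1 := ⟨X * k - m, by rw [hk] at hm; linarith⟩
    exact hpI.not_dvd_one this
  obtain ⟨k1, hk1⟩ := hd
  obtain ⟨m1, hm1⟩ := hW
  have hdvd2 : (p : ℤ) ∣ b * (Y * v) ^ 2 + a :=
    ⟨v ^ 2 * k1 - a * m1 * (X * v + 1), by linear_combination v ^ 2 * hk1 - a * (X * v + 1) * hm1⟩
  have hunit : ∀ k : ℤ, ¬ (p : ℤ) ∣ k → IsUnit ((k : ℤ) : ℤ_[p]) := by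
    intro k hk
    rw [PadicInt.isUnit_iff]
    exact le_antisymm (PadicInt.norm_le_one _)
      (not_lt.mp (fun h => hk ((PadicInt.norm_int_lt_one_iff_dvd k).mp h)))
  set t₀ : ℤ_[p] := ((Y * v : ℤ) : ℤ_[p]) with ht₀
  set F : Polynomial ℤ_[p] := C (b : ℤ_[p]) * Polynomial.X ^ 2 + C (a : ℤ_[p]) with hF
  have hevF : ∀ z : ℤ_[p], F.eval z = (b : ℤ_[p]) * z ^ 2 + (a : ℤ_[p]) := by
    intro z; simp [hF]
  have hderiv : ∀ z : ℤ_[p], F.derivative.eval z = 2 * (b : ℤ_[p]) * z := by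
    intro z; simp [hF]; ring
  have hderiv_unit : IsUnit (F.derivative.eval t₀) := by
    rw [hderiv]
    refine (IsUnit.mul ?_ ?_).mul ?_
    · have : ¬ (p : ℤ) ∣ (2 : ℤ) := by
        intro h
        have h2 : p ∣ 2 := by exact_mod_cast h
        exact hp2 ((Nat.prime_dvd_prime_iff_eq hp Nat.prime_two).mp h2)
      simpa using hunit 2 this
    · exact hunit b hnb
    · exact hunit (Y * v) (fun h => by
        rcases hpI.dvd_mul.mp h with h | h
        · exact hY h
        · exact hvp h)
  have hnorm_deriv : ‖F.derivative.eval t₀‖ = 1 := PadicInt.isUnit_iff.mp hderiv_unit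
  have hnorm_ev : ‖F.eval t₀‖ < 1 := by
    rw [hevF]
    have : ((b * (Y * v) ^ 2 + a : ℤ) : ℤ_[p]) = (b : ℤ_[p]) * t₀ ^ 2 + (a : ℤ_[p]) := by
      push_cast [ht₀]; ring
    rw [← this]
    exact (PadicInt.norm_int_lt_one_iff_dvd _).mpr hdvd2
  have hlt : ‖F.eval t₀‖ < ‖F.derivative.eval t₀‖ ^ 2 := by
    rw [hnorm_deriv]; simpa using hnorm_ev
  obtain ⟨z, hz, -⟩ := hensels_lemma hlt
  exact ⟨z, by rw [Polynomial.coe_aeval_eq_eval, hevF] at hz; exact hz⟩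

lemma key_dvd (p : ℕ) (hp : p.Prime) [Fact p.Prime] (hp2 : p ≠ 2) (a b : ℤ)
    (hna : ¬ (p : ℤ) ∣ a) (hnb : ¬ (p : ℤ) ∣ b)
    (haniso : ∀ x y : ℤ_[p], (a : ℤ_[p]) * x ^ 2 + (b : ℤ_[p]) * y ^ 2 = 0 → x = 0 ∧ y = 0)
    (X Y : ℤ) (hd : (p : ℤ) ∣ a * X ^ 2 + b * Y ^ 2) :
    (p : ℤ) ∣ X ∧ (p : ℤ) ∣ Y := by
  constructor
  · by_contra hX
    obtain ⟨t, ht⟩ := hensel_solve p hp hp2 a b X Y hna hnb hX hd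
    have := (haniso 1 t (by linear_combination ht)).1
    simp at this
  · by_contra hY
    have hd' : (p : ℤ) ∣ b * Y ^ 2 + a * X ^ 2 := by rwa [add_comm] at hd
    obtain ⟨t, ht⟩ := hensel_solve p hp hp2 b a Y X hnb hna hY hd'
    have := (haniso t 1 (by linear_combination ht)).2
    simp at this

theorem stmt9 (p : ℕ) (hp : p.Prime) (hp2 : p ≠ 2) (a b c : ℤ) (s : ℕ) (hs : 2 ≤ s)
    (ha : 0 < a) (hb : 0 < b) (hc : 0 < c)
    (hndvd : ¬ (p : ℤ) ∣ a * b * c)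
    (hprim : Int.gcd a (Int.gcd b ((p : ℤ) ^ s * c)) = 1)
    (haniso : letI : Fact p.Prime := ⟨hp⟩
      ∀ x y : ℤ_[p], (a : ℤ_[p]) * x ^ 2 + (b : ℤ_[p]) * y ^ 2 = 0 → x = 0 ∧ y = 0)
    (hreg : OddRegular a b ((p : ℤ) ^ s * c)) :
    OddRegular a b ((p : ℤ) ^ (s - 2) * c) := by
  obtain ⟨m, rfl⟩ : ∃ m, s = m + 2 := ⟨s - 2, by omega⟩
  simp only [Nat.add_sub_cancel] at *
  haveI : Fact p.Prime := ⟨hp⟩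
  have hpI : Prime (p : ℤ) := Nat.prime_iff_prime_int.mp hp
  have hna : ¬ (p : ℤ) ∣ a := fun h => hndvd ((h.mul_right b).mul_right c)
  have hnb : ¬ (p : ℤ) ∣ b := fun h => hndvd (((h.mul_left a)).mul_right c)
  intro n hn hodd hloc
  have hlocs : ∀ (q : ℕ) (hq : q.Prime), ReprAt q hq a b ((p : ℤ) ^ (m + 2) * c) ((p : ℤ) ^ 2 * n) := by
    intro q hq
    haveI : Fact q.Prime := ⟨hq⟩
    obtain ⟨x, y, z, hxyz⟩ := hloc q hq
    refine ⟨(p : ℤ_[q]) * x, (p : ℤ_[q]) * y, z, ?_⟩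
    push_cast at hxyz ⊢
    linear_combination (p : ℤ_[q]) ^ 2 * hxyz
  have hppos : 0 < (p : ℤ) := by exact_mod_cast hp.pos
  have hpos : 0 < (p : ℤ) ^ 2 * n := by positivity
  have hoddp : Odd ((p : ℤ) ^ 2 * n) := by
    refine Odd.mul (Odd.pow ?_) hodd
    rw [Int.odd_coe_nat]
    exact hp.odd_of_ne_two hp2
  obtain ⟨X, Y, Z, hXYZ⟩ := hreg _ hpos hoddp hlocs
  have hd : (p : ℤ) ∣ a * X ^ 2 + b * Y ^ 2 :=
    ⟨p * n - (p : ℤ) ^ (m + 1) * c * Z ^ 2, by ring_nf; ring_nf at hXYZ; linarith⟩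
  obtain ⟨hXd, hYd⟩ := key_dvd p hp hp2 a b hna hnb haniso X Y hd
  obtain ⟨X', rfl⟩ := hXd
  obtain ⟨Y', rfl⟩ := hYd
  refine ⟨X', Y', Z, ?_⟩
  have hp0 : ((p : ℤ) ^ 2) ≠ 0 := pow_ne_zero _ (by exact_mod_cast hp.ne_zero)
  apply mul_left_cancel₀ hp0
  linear_combination hXYZ
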